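/- arXiv:2104.14706 — 2 statements merged into one kernel-verified Lean document; each statement's English description precedes it below -/
import Mathlib

section
/- Let μ0 and μ1 be probability measures on a measurable space (Ω, F) with a filtration {F_k}_{k≥1} such that μ0 and μ1 are mutually absolutely continuous when restricted to each F_k, and let G_k denote the logarithm of the Radon–Nikodym derivative of μ0|_{F_k} with respect to μ1|_{F_k}. Let T be a stopping time for {F_k} with μ0(T < ∞) = μ1(T < ∞) = 1. Then for every event E in the stopped σ-algebra F_T and every λ > 0: μ0(E) − λ μ1(E) ≤ μ0(G_T ≥ log λ) and μ1(E) − λ μ0(E) ≤ μ1(−G_T ≥ log λ). -/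
/-!
On the slice `{T = k}` the event `E` is `F_k`-measurable, and on `F_k` the measure `μ0` has
density `exp G_k` with respect to `μ1`. Split `E ∩ {T = k}` according to whether
`G_k ≥ log λ`: where `G_k < log λ` the `μ0`-mass is at most `λ` times the `μ1`-mass, and the
rest lies in `{G_T ≥ log λ}`. Summing over `k` (the slices cover `E` up to the null set
`{T = ∞}`) gives the first bound; the second is the same argument with `1 ≤ λ exp G_k` off
`{-G_k ≥ log λ}`.
-/

open MeasureTheory
open scoped ENNReal

namespace SQHT

variable {Ω : Type*}

/-- The stopped σ-algebra `F_T`: all events `A` with `A ∩ {T = k} ∈ F_k` for every `k`. -/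
def stoppedMS [mΩ : MeasurableSpace Ω] (ℱ : Filtration ℕ mΩ) (T : Ω → ℕ∞)
    (hT : ∀ k : ℕ, MeasurableSet[ℱ k] {ω | T ω = (k : ℕ∞)}) : MeasurableSpace Ω where
  MeasurableSet' A := MeasurableSet[mΩ] A ∧
    ∀ k : ℕ, MeasurableSet[ℱ k] (A ∩ {ω | T ω = (k : ℕ∞)})
  measurableSet_empty := ⟨MeasurableSet.empty, fun k => by
    simp⟩
  measurableSet_compl := by
    rintro A ⟨hA, hAk⟩
    refine ⟨hA.compl, fun k => ?_⟩
    have h : Aᶜ ∩ {ω | T ω = (k : ℕ∞)} =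
        {ω | T ω = (k : ℕ∞)} \ (A ∩ {ω | T ω = (k : ℕ∞)}) := by
      ext ω; simp only [Set.mem_inter_iff, Set.mem_compl_iff, Set.mem_setOf_eq,
        Set.mem_diff]; tauto
    rw [h]; exact (hT k).diff (hAk k)
  measurableSet_iUnion := by
    rintro f hf
    exact ⟨MeasurableSet.iUnion fun i => (hf i).1, fun k => by
      rw [Set.iUnion_inter]; exact MeasurableSet.iUnion fun i => (hf i).2 k⟩

theorem pairwise_disjoint_inter_eq_coe {T : Ω → ℕ∞} (s : ℕ → Set Ω) :
    Pairwise (Function.onFun Disjoint fun k : ℕ => s k ∩ {ω | T ω = k}) := fun _ _ hij =>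
  ((pairwise_disjoint_fiber T).comp_of_injective Nat.cast_injective hij).mono
    Set.inter_subset_right Set.inter_subset_right

section Slices

variable [MeasurableSpace Ω] {μ ν : Measure Ω} {T : Ω → ℕ∞}

theorem measure_eq_tsum_inter_eq_coe (hμT : μ {ω | T ω = ⊤} = 0)
    (hT : ∀ k : ℕ, MeasurableSet {ω | T ω = k}) {E : Set Ω} (hE : MeasurableSet E) :
    μ E = ∑' k : ℕ, μ (E ∩ {ω | T ω = k}) := by
  have hfinite : E \ {ω | T ω = ⊤} = ⋃ k : ℕ, E ∩ {ω | T ω = k} := by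
    ext ω
    simp only [Set.mem_sdiff, Set.mem_iUnion, Set.mem_inter_iff, Set.mem_ofPred_eq,
      exists_and_left, and_congr_right_iff]
    exact fun _ =>
      ⟨fun h => ⟨_, (ENat.natCast_toNat h).symm⟩, fun ⟨k, hk⟩ => hk ▸ ENat.natCast_ne_top k⟩
  rw [← measure_sdiff_null hμT, hfinite,
    measure_iUnion (pairwise_disjoint_inter_eq_coe _) fun k => hE.inter (hT k)]

theorem tsum_measure_inter_eq_coe_le (hT : ∀ k : ℕ, MeasurableSet {ω | T ω = k})
    {s : ℕ → Set Ω} (hs : ∀ k, MeasurableSet (s k)) {t : Set Ω}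
    (hst : ∀ k : ℕ, s k ∩ {ω | T ω = k} ⊆ t) :
    ∑' k : ℕ, μ (s k ∩ {ω | T ω = k}) ≤ μ t :=
  (tsum_meas_le_meas_iUnion_of_disjoint μ (fun k => (hs k).inter (hT k))
    (pairwise_disjoint_inter_eq_coe s)).trans (measure_mono (Set.iUnion_subset hst))

theorem measure_le_mul_add_measure_stopped (hμT : μ {ω | T ω = ⊤} = 0)
    (hT : ∀ k : ℕ, MeasurableSet {ω | T ω = k}) {E : Set Ω} (hE : MeasurableSet E)
    {P : ℕ → Ω → Prop} (hP : ∀ k, MeasurableSet {ω | P k ω}) {c : ℝ≥0∞}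
    (h : ∀ k : ℕ, μ (E ∩ {ω | T ω = k}) ≤
      c * ν (E ∩ {ω | T ω = k}) + μ (E ∩ {ω | T ω = k} ∩ {ω | P k ω})) :
    μ E ≤ c * ν E + μ {ω | P (T ω).toNat ω} := by
  have hPE : ∀ k, MeasurableSet (E ∩ {ω | P k ω}) := fun k => hE.inter (hP k)
  calc μ E = ∑' k : ℕ, μ (E ∩ {ω | T ω = k}) := measure_eq_tsum_inter_eq_coe hμT hT hE
    _ ≤ ∑' k : ℕ, (c * ν (E ∩ {ω | T ω = k}) + μ (E ∩ {ω | P k ω} ∩ {ω | T ω = k})) := by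
      refine ENNReal.tsum_le_tsum fun k => (h k).trans_eq ?_
      rw [Set.inter_right_comm]
    _ = c * ∑' k : ℕ, ν (E ∩ {ω | T ω = k})
          + ∑' k : ℕ, μ (E ∩ {ω | P k ω} ∩ {ω | T ω = k}) := by
      rw [ENNReal.tsum_add, ENNReal.tsum_mul_left]
    _ ≤ c * ν E + μ {ω | P (T ω).toNat ω} := by
      gcongr
      · exact tsum_measure_inter_eq_coe_le hT (fun _ => hE) fun _ => Set.inter_subset_left
      · refine tsum_measure_inter_eq_coe_le hT hPE fun k ω ⟨⟨_, hPω⟩, hTω⟩ => ?_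
        simpa [Set.mem_ofPred_eq.mp hTω] using hPω

end Slices

section Density

variable {m m0 : MeasurableSpace Ω} {μ ν : Measure[m0] Ω} {f : Ω → ℝ≥0∞} {A S : Set Ω}
  {c : ℝ≥0∞}

theorem measure_le_mul_add_of_density_le
    (hμν : ∀ s, MeasurableSet[m] s → μ s = ∫⁻ ω in s, f ω ∂ν)
    (hA : MeasurableSet[m] A) (hS : MeasurableSet[m] S) (hf : ∀ ω ∈ A \ S, f ω ≤ c) :
    μ A ≤ c * ν A + μ (A ∩ S) := by
  calc μ A ≤ μ (A ∩ S) + μ (A \ S) := measure_le_inter_add_sdiff μ A S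
    _ ≤ μ (A ∩ S) + c * ν A := by
      gcongr
      calc μ (A \ S) = ∫⁻ ω in A \ S, f ω ∂ν := hμν _ (hA.diff hS)
        _ ≤ ∫⁻ _ in A \ S, c ∂ν := setLIntegral_mono measurable_const hf
        _ = c * ν (A \ S) := setLIntegral_const _ _
        _ ≤ c * ν A := by gcongr; exact Set.sdiff_subset
    _ = c * ν A + μ (A ∩ S) := add_comm _ _

theorem measure_le_mul_add_of_one_le_mul_density
    (hm : m ≤ m0) (hμν : ∀ s, MeasurableSet[m] s → μ s = ∫⁻ ω in s, f ω ∂ν)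
    (hA : MeasurableSet[m] A) (hS : MeasurableSet[m] S) (hc : c ≠ ⊤)
    (hf : ∀ ω ∈ A \ S, 1 ≤ c * f ω) :
    ν A ≤ c * μ A + ν (A ∩ S) := by
  calc ν A ≤ ν (A ∩ S) + ν (A \ S) := measure_le_inter_add_sdiff ν A S
    _ ≤ ν (A ∩ S) + c * μ A := by
      gcongr
      calc ν (A \ S) = ∫⁻ _ in A \ S, 1 ∂ν := (setLIntegral_one _).symm
        _ ≤ ∫⁻ ω in A \ S, c * f ω ∂ν := setLIntegral_mono' (hm _ (hA.diff hS)) hf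
        _ = c * μ (A \ S) := by rw [lintegral_const_mul' _ _ hc, hμν _ (hA.diff hS)]
        _ ≤ c * μ A := by gcongr; exact Set.sdiff_subset
    _ = c * μ A + ν (A ∩ S) := add_comm _ _

end Density

theorem toReal_sub_mul_le_of_le {a b d : ℝ≥0∞} {c : ℝ} (hc : 0 ≤ c) (hb : b ≠ ⊤) (hd : d ≠ ⊤)
    (h : a ≤ ENNReal.ofReal c * b + d) : a.toReal - c * b.toReal ≤ d.toReal := by
  have hreal := ENNReal.toReal_mono (by finiteness) h
  rw [ENNReal.toReal_add (by finiteness) hd, ENNReal.toReal_mul, ENNReal.toReal_ofReal hc]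
    at hreal
  linarith

/-- Lemma 11(ii) in the paper: for any event `E` in the stopped
σ-algebra `F_T` and any `λ > 0`,
`μ0(E) − λ μ1(E) ≤ μ0(G_T ≥ log λ)` and `μ1(E) − λ μ0(E) ≤ μ1(−G_T ≥ log λ)`. -/
theorem stopped_event_probability_bounds
    [mΩ : MeasurableSpace Ω] (μ0 μ1 : Measure Ω)
    [IsProbabilityMeasure μ0] [IsProbabilityMeasure μ1]
    (ℱ : Filtration ℕ mΩ) (G : ℕ → Ω → ℝ)
    (hGmeas : ∀ k, Measurable[ℱ k] (G k))
    (hRN : ∀ (k : ℕ) (s : Set Ω), MeasurableSet[ℱ k] s →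
      μ0 s = ∫⁻ ω in s, ENNReal.ofReal (Real.exp (G k ω)) ∂μ1)
    (T : Ω → ℕ∞) (hT : ∀ k : ℕ, MeasurableSet[ℱ k] {ω | T ω = (k : ℕ∞)})
    (hT0 : μ0 {ω | T ω = ⊤} = 0) (hT1 : μ1 {ω | T ω = ⊤} = 0)
    (E : Set Ω) (hE : MeasurableSet[stoppedMS ℱ T hT] E)
    (lam : ℝ) (hlam : 0 < lam) :
    (μ0 E).toReal - lam * (μ1 E).toReal ≤
      (μ0 {ω | Real.log lam ≤ G (T ω).toNat ω}).toReal ∧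
    (μ1 E).toReal - lam * (μ0 E).toReal ≤
      (μ1 {ω | Real.log lam ≤ -(G (T ω).toNat ω)}).toReal := by
  have hTk : ∀ k : ℕ, MeasurableSet {ω | T ω = k} := fun k => ℱ.le k _ (hT k)
  have hslice : ∀ k : ℕ, MeasurableSet[ℱ k] (E ∩ {ω | T ω = k}) := hE.2
  have hup : ∀ k, MeasurableSet[ℱ k] {ω | Real.log lam ≤ G k ω} :=
    fun k => measurableSet_le measurable_const (hGmeas k)
  have hdown : ∀ k, MeasurableSet[ℱ k] {ω | Real.log lam ≤ -G k ω} :=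
    fun k => measurableSet_le measurable_const (hGmeas k).neg
  constructor
  · refine toReal_sub_mul_le_of_le hlam.le (measure_ne_top _ _) (measure_ne_top _ _) ?_
    refine measure_le_mul_add_measure_stopped hT0 hTk hE.1 (fun k => ℱ.le k _ (hup k))
      fun k => measure_le_mul_add_of_density_le (hRN k) (hslice k) (hup k) fun ω hω => ?_
    have hG : G k ω < Real.log lam := not_le.mp hω.2
    exact ENNReal.ofReal_le_ofReal ((Real.lt_log_iff_exp_lt hlam).mp hG).le
  · refine toReal_sub_mul_le_of_le hlam.le (measure_ne_top _ _) (measure_ne_top _ _) ?_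
    refine measure_le_mul_add_measure_stopped hT1 hTk hE.1 (fun k => ℱ.le k _ (hdown k))
      fun k => measure_le_mul_add_of_one_le_mul_density (ℱ.le k) (hRN k) (hslice k) (hdown k)
        ENNReal.ofReal_ne_top fun ω hω => ?_
    have hG : Real.exp (-G k ω) < lam := (Real.lt_log_iff_exp_lt hlam).mp (not_le.mp hω.2)
    rw [← ENNReal.ofReal_mul hlam.le, ENNReal.one_le_ofReal]
    calc 1 = Real.exp (-G k ω) * Real.exp (G k ω) := by
          rw [← Real.exp_add, neg_add_cancel, Real.exp_zero]
      _ ≤ lam * Real.exp (G k ω) := by gcongr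

end SQHT
end

section
/- In the sign-adaptive SQPRT construction below, with ρ0 ≠ ρ1, there exists, for every sufficiently small λ > 0, a constant c ∈ (0,1) such that for all k ≥ 1: E_0[e^{−λ S_k}] ≤ c^k and P_0(S_k < 0) ≤ c^k. -/
/-!
Under `ρ0`, a step of the test that measures with `m` multiplies `E₀[e^{-λ S}]` by
`φ(m) = ∑ₓ P₀(x)^{1-λ} P₁(x)^λ`, where `Pᵢ` is the outcome law of `m` on `ρᵢ`; for `0 < λ < 1`,
strict convexity of `exp` gives `φ(m) < 1` as soon as `P₀ ≠ P₁`. Both optimal measurements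
separate the states: a PVM diagonalising `ρ0 - ρ1` already does, so `D_M > 0` by Gibbs'
inequality, whereas a measurement with `P₀ = P₁` has divergence `0`. So whichever of the two the
adaptive rule picks, the factor is at most `c = max (φ m₀*) (φ m₁*) < 1`, whence
`E₀[e^{-λ S_k}] ≤ c^k`, and Chernoff's bound gives `P₀(S_k < 0) ≤ E₀[e^{-λ S_k}]`.
-/

open Filter
open scoped ENNReal ComplexOrder Classical

namespace SQHT

/-- `d × d` complex matrices over an index type `ι`. -/
abbrev Mat (ι : Type) := Matrix ι ι ℂ

variable {d : ℕ}

/-- A quantum state: positive semidefinite with unit trace. -/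
def IsState (ρ : Mat (Fin d)) : Prop := ρ.PosSemidef ∧ ρ.trace = 1

/-- Born probability of outcome `x` when measuring `m` on state `ρ`. -/
noncomputable def outProb (ρ : Mat (Fin d)) (m : Fin d → Mat (Fin d)) (x : Fin d) : ℝ :=
  ((ρ * m x).trace).re

/-- Classical relative entropy (KL divergence) of two pmfs on a finite set,
with the convention `0 log 0 = 0`. -/
noncomputable def KL {X : Type*} [Fintype X] (P Q : X → ℝ) : ℝ :=
  ∑ x, if P x = 0 then 0 else P x * Real.log (P x / Q x)

/-- A rank-one projective measurement with `d` outcomes. -/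
def IsRankOnePVM (m : Fin d → Mat (Fin d)) : Prop :=
  (∀ x, (m x).PosSemidef) ∧ ∑ x, m x = 1 ∧ (∀ x, m x * m x = m x) ∧ ∀ x, (m x).rank = 1

/-- The measured relative entropy `D_M(ρ0‖ρ1)`. -/
noncomputable def Dmeas (ρ0 ρ1 : Mat (Fin d)) : ℝ :=
  ⨆ m : {m : Fin d → Mat (Fin d) // IsRankOnePVM m}, KL (outProb ρ0 m.1) (outProb ρ1 m.1)

/-- Single-outcome log-likelihood ratio for measurement `m`. -/
noncomputable def llr (ρ0 ρ1 : Mat (Fin d)) (m : Fin d → Mat (Fin d)) (x : Fin d) : ℝ :=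
  Real.log (outProb ρ0 m x) - Real.log (outProb ρ1 m x)

/-- The sign-adaptive SQPRT dynamics: given the initial coin `b` (`M_1 = m0` if `b`,
else `M_1 = m1`) and the first `k` outcomes, return the pair consisting of the
measurement `M_{k+1}` to be used next and the current log-likelihood sum `S_k`;
for `k ≥ 1`, `M_{k+1} = m0` if `S_k ≥ 0` and `M_{k+1} = m1` otherwise. -/
noncomputable def run (ρ0 ρ1 : Mat (Fin d)) (m0 m1 : Fin d → Mat (Fin d)) (b : Bool) :
    (k : ℕ) → (Fin k → Fin d) → ((Fin d → Mat (Fin d)) × ℝ)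
  | 0, _ => (bif b then m0 else m1, 0)
  | (k + 1), x =>
      let p := run ρ0 ρ1 m0 m1 b k (Fin.init x)
      let Snew := p.2 + llr ρ0 ρ1 p.1 (x (Fin.last k))
      (if 0 ≤ Snew then m0 else m1, Snew)

/-- The value `S_k` of the accumulated log-likelihood ratio along a path. -/
noncomputable def Sval (ρ0 ρ1 : Mat (Fin d)) (m0 m1 : Fin d → Mat (Fin d)) (b : Bool)
    (k : ℕ) (x : Fin k → Fin d) : ℝ :=
  (run ρ0 ρ1 m0 m1 b k x).2

/-- The probability, when the true state is `ρ`, of the initial coin being `b`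
and the first `k` outcomes being `x` (the coin is uniform on two values). -/
noncomputable def pathProb (ρ0 ρ1 : Mat (Fin d)) (m0 m1 : Fin d → Mat (Fin d))
    (ρ : Mat (Fin d)) (b : Bool) : (k : ℕ) → (Fin k → Fin d) → ℝ
  | 0, _ => 1 / 2
  | (k + 1), x =>
      pathProb ρ0 ρ1 m0 m1 ρ b k (Fin.init x) *
        outProb ρ ((run ρ0 ρ1 m0 m1 b k (Fin.init x)).1) (x (Fin.last k))

/-- Expectation, under the true state `ρ0`, of a path functional after `k` steps. -/
noncomputable def E0 (ρ0 ρ1 : Mat (Fin d)) (m0 m1 : Fin d → Mat (Fin d)) (k : ℕ)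
    (f : Bool → (Fin k → Fin d) → ℝ) : ℝ :=
  ∑ b : Bool, ∑ x : Fin k → Fin d, pathProb ρ0 ρ1 m0 m1 ρ0 b k x * f b x

/-- `P_0(S_k < 0)` for the sign-adaptive SQPRT. -/
noncomputable def probSneg (ρ0 ρ1 : Mat (Fin d)) (m0 m1 : Fin d → Mat (Fin d)) (k : ℕ) : ℝ :=
  ∑ b : Bool, ∑ x : Fin k → Fin d,
    if Sval ρ0 ρ1 m0 m1 b k x < 0 then pathProb ρ0 ρ1 m0 m1 ρ0 b k x else 0

end SQHT

open scoped MatrixOrder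

namespace Matrix

variable {n 𝕜 : Type*} [Fintype n] [RCLike 𝕜]

theorem trace_eq_rank_of_isIdempotentElem [DecidableEq n] {K : Type*} [Field K] {A : Matrix n n K}
    (hA : IsIdempotentElem A) : A.trace = A.rank := by
  have h : IsIdempotentElem A.toLin' := hA.map Matrix.toLinAlgEquiv'
  rw [← trace_toLin'_eq, (LinearMap.IsIdempotentElem.isProj_range _ h).trace, rank]
  rfl

theorem IsHermitian.posSemidef_of_isIdempotentElem {A : Matrix n n 𝕜} (hA : A.IsHermitian)
    (h : IsIdempotentElem A) : A.PosSemidef := by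
  rw [← h.eq]
  nth_rw 1 [← hA.eq]
  exact posSemidef_conjTranspose_mul_self A

theorem PosSemidef.trace_mul_nonneg {A B : Matrix n n 𝕜} (hA : A.PosSemidef)
    (hB : B.PosSemidef) : 0 ≤ (A * B).trace := by
  have hS : (CFC.sqrt B).IsHermitian := (nonneg_iff_posSemidef.1 (CFC.sqrt_nonneg B)).isHermitian
  have hSAS := hA.mul_mul_conjTranspose_same (CFC.sqrt B)
  rw [hS.eq] at hSAS
  rw [← CFC.sqrt_mul_sqrt_self B hB.nonneg, ← mul_assoc, trace_mul_comm, ← mul_assoc]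
  exact hSAS.trace_nonneg

theorem trace_mul_le_trace_mul_of_le {A B C : Matrix n n 𝕜} (hAB : A ≤ B)
    (hC : C.PosSemidef) : (A * C).trace ≤ (B * C).trace := by
  have := PosSemidef.trace_mul_nonneg (le_iff.1 hAB) hC
  rwa [sub_mul, trace_sub, sub_nonneg] at this

theorem PosDef.exists_pos_smul_one_le [DecidableEq n] {A : Matrix n n 𝕜} (hA : A.PosDef) :
    ∃ r : ℝ, 0 < r ∧ r • (1 : Matrix n n 𝕜) ≤ A := by
  cases isEmpty_or_nonempty n
  · exact ⟨1, one_pos, (Subsingleton.elim _ _).le⟩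
  · simpa [Algebra.algebraMap_eq_smul_one] using
      (CFC.exists_pos_algebraMap_le_iff hA.isHermitian.isSelfAdjoint).2
        fun _ hx => (isStrictlyPositive_iff_posDef.2 hA).spectrum_pos hx

end Matrix

namespace SQHT

open Matrix

variable {d : ℕ}

theorem IsRankOnePVM.trace_eq_one {m : Fin d → Mat (Fin d)} (hm : IsRankOnePVM m) (x : Fin d) :
    (m x).trace = 1 := by
  rw [trace_eq_rank_of_isIdempotentElem (hm.2.2.1 x), hm.2.2.2 x, Nat.cast_one]

theorem isRankOnePVM_of_trace_eq_one {m : Fin d → Mat (Fin d)} (hH : ∀ x, (m x).IsHermitian)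
    (hsum : ∑ x, m x = 1) (hidem : ∀ x, IsIdempotentElem (m x)) (htr : ∀ x, (m x).trace = 1) :
    IsRankOnePVM m := by
  refine ⟨fun x => (hH x).posSemidef_of_isIdempotentElem (hidem x), hsum, hidem, fun x => ?_⟩
  exact_mod_cast (trace_eq_rank_of_isIdempotentElem (hidem x)).symm.trans (htr x)

theorem isRankOnePVM_single : IsRankOnePVM (fun x : Fin d => single x x (1 : ℂ)) :=
  isRankOnePVM_of_trace_eq_one (fun x => by simp [IsHermitian, conjTranspose_single])
    sum_single_one (fun x => by simp [IsIdempotentElem, single_mul_single_same])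
    (fun x => trace_single_eq_same x 1)

theorem IsRankOnePVM.map {m : Fin d → Mat (Fin d)} (hm : IsRankOnePVM m)
    (α : Mat (Fin d) ≃⋆ₐ[ℂ] Mat (Fin d)) : IsRankOnePVM (fun x => α (m x)) := by
  refine isRankOnePVM_of_trace_eq_one (fun x => ?_) (by rw [← map_sum, hm.2.1, map_one])
    (fun x => IsIdempotentElem.map (hm.2.2.1 x) α) (fun x => by rw [trace_map', hm.trace_eq_one])
  simp only [IsHermitian, ← star_eq_conjTranspose, ← map_star, (hm.1 x).isHermitian.star_eq]

theorem outProb_map (α : Mat (Fin d) ≃⋆ₐ[ℂ] Mat (Fin d)) (ρ : Mat (Fin d))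
    (m : Fin d → Mat (Fin d)) (x : Fin d) :
    outProb ρ (fun y => α (m y)) x = outProb (α.symm ρ) m x := by
  unfold outProb
  rw [← trace_map' α (α.symm ρ * m x), map_mul, StarAlgEquiv.apply_symm_apply]

theorem outProb_single (ρ : Mat (Fin d)) (x : Fin d) :
    outProb ρ (fun y => single y y (1 : ℂ)) x = (ρ x x).re := by
  simp [outProb, trace_mul_single]

theorem exists_isRankOnePVM_outProb_ne {σ τ : Mat (Fin d)} (hσ : σ.IsHermitian)
    (hτ : τ.IsHermitian) (hne : σ ≠ τ) :
    ∃ m, IsRankOnePVM m ∧ outProb σ m ≠ outProb τ m := by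
  have hΔ : (σ - τ).IsHermitian := hσ.sub hτ
  set α := Unitary.conjStarAlgAut ℂ (Mat (Fin d)) hΔ.eigenvectorUnitary
  have hdiag : α.symm (σ - τ) = diagonal (RCLike.ofReal ∘ hΔ.eigenvalues) := by
    rw [← hΔ.conjStarAlgAut_star_eigenvectorUnitary, Unitary.conjStarAlgAut_symm_apply,
      Unitary.conjStarAlgAut_apply, Unitary.coe_star, star_star]
  obtain ⟨x, hx⟩ : ∃ x, hΔ.eigenvalues x ≠ 0 := by
    by_contra! h
    exact sub_ne_zero.2 hne (hΔ.eigenvalues_eq_zero_iff.1 (funext h))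
  refine ⟨_, isRankOnePVM_single.map α, fun h => hx ?_⟩
  have hx' := congrArg (· x) h
  simp only [outProb_map, outProb_single] at hx'
  calc hΔ.eigenvalues x = (α.symm (σ - τ) x x).re := by simp [hdiag]
    _ = 0 := by rw [map_sub, Matrix.sub_apply, Complex.sub_re, hx', sub_self]

theorem outProb_nonneg {ρ : Mat (Fin d)} {m : Fin d → Mat (Fin d)} {x : Fin d}
    (hρ : ρ.PosSemidef) (hm : (m x).PosSemidef) : 0 ≤ outProb ρ m x :=
  (Complex.nonneg_iff.1 (hρ.trace_mul_nonneg hm)).1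

theorem sum_outProb {ρ : Mat (Fin d)} {m : Fin d → Mat (Fin d)} (hρ : IsState ρ)
    (hm : ∑ x, m x = 1) : ∑ x, outProb ρ m x = 1 := by
  simp only [outProb, ← Complex.re_sum, ← trace_sum, ← Finset.mul_sum, hm, mul_one, hρ.2,
    Complex.one_re]

theorem le_outProb {ρ : Mat (Fin d)} {m : Fin d → Mat (Fin d)} {r : ℝ}
    (hρ : r • (1 : Mat (Fin d)) ≤ ρ) (hm : IsRankOnePVM m) (x : Fin d) : r ≤ outProb ρ m x := by
  have := (Complex.le_def.1 (trace_mul_le_trace_mul_of_le hρ (hm.1 x))).1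
  simpa [outProb, hm.trace_eq_one] using this

theorem outProb_pos {ρ : Mat (Fin d)} {m : Fin d → Mat (Fin d)} (hρ : ρ.PosDef)
    (hm : IsRankOnePVM m) (x : Fin d) : 0 < outProb ρ m x := by
  obtain ⟨r, hr, hρr⟩ := hρ.exists_pos_smul_one_le
  exact hr.trans_le (le_outProb hρr hm x)

theorem KL_self {X : Type*} [Fintype X] (P : X → ℝ) : KL P P = 0 :=
  Finset.sum_eq_zero fun x _ => by split_ifs with h <;> simp [h]

theorem KL_eq_sum_mul_log {X : Type*} [Fintype X] {P Q : X → ℝ} (hP : ∀ x, 0 < P x) :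
    KL P Q = ∑ x, P x * Real.log (P x / Q x) :=
  Finset.sum_congr rfl fun x _ => if_neg (hP x).ne'

theorem KL_pos {X : Type*} [Fintype X] {P Q : X → ℝ} (hP : ∀ x, 0 < P x) (hQ : ∀ x, 0 < Q x)
    (hsP : ∑ x, P x = 1) (hsQ : ∑ x, Q x = 1) (hne : P ≠ Q) : 0 < KL P Q := by
  obtain ⟨x₀, hx₀⟩ := Function.ne_iff.1 hne
  have hterm : ∀ x, Q x - P x = P x * (Q x / P x - 1) := fun x => by
    field_simp [(hP x).ne']
  have hle : ∀ x ∈ Finset.univ, P x * Real.log (Q x / P x) ≤ Q x - P x := fun x _ => by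
    rw [hterm]
    exact mul_le_mul_of_nonneg_left (Real.log_le_sub_one_of_pos (div_pos (hQ x) (hP x)))
      (hP x).le
  have hlt : P x₀ * Real.log (Q x₀ / P x₀) < Q x₀ - P x₀ := by
    rw [hterm]
    refine mul_lt_mul_of_pos_left (Real.log_lt_sub_one_of_pos (div_pos (hQ x₀) (hP x₀)) ?_)
      (hP x₀)
    rwa [Ne, div_eq_one_iff_eq (hP x₀).ne', eq_comm]
  have hsum := Finset.sum_lt_sum hle ⟨x₀, Finset.mem_univ _, hlt⟩
  rw [Finset.sum_sub_distrib, hsP, hsQ, sub_self] at hsum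
  calc 0 < -∑ x, P x * Real.log (Q x / P x) := neg_pos.2 hsum
    _ = KL P Q := by
      rw [KL_eq_sum_mul_log hP, ← Finset.sum_neg_distrib]
      simp only [← mul_neg, ← Real.log_inv, inv_div]

theorem KL_le_neg_log {X : Type*} [Fintype X] {P Q : X → ℝ} {r : ℝ} (hr : 0 < r)
    (hP : ∀ x, 0 ≤ P x) (hsP : ∑ x, P x = 1) (hQ : ∀ x, r ≤ Q x) : KL P Q ≤ -Real.log r := by
  have hterm : ∀ x ∈ Finset.univ,
      (if P x = 0 then 0 else P x * Real.log (P x / Q x)) ≤ P x * -Real.log r := fun x _ => by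
    split_ifs with h
    · simp [h]
    have hPpos : 0 < P x := (hP x).lt_of_ne' h
    have hP1 : P x ≤ 1 := hsP ▸ Finset.single_le_sum (fun y _ => hP y) (Finset.mem_univ x)
    refine mul_le_mul_of_nonneg_left ?_ (hP x)
    rw [← Real.log_inv, ← one_div]
    exact Real.log_le_log (div_pos hPpos (hr.trans_le (hQ x)))
      (div_le_div₀ zero_le_one hP1 hr (hQ x))
  calc KL P Q ≤ ∑ x, P x * -Real.log r := by unfold KL; exact Finset.sum_le_sum hterm
    _ = -Real.log r := by rw [← Finset.sum_mul, hsP, one_mul]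

-- Without this bound `Dmeas`, a `⨆` over `ℝ`, would be the junk value `0`.
theorem bddAbove_KL_outProb {σ τ : Mat (Fin d)} (hσ : IsState σ) (hτ : τ.PosDef) :
    BddAbove (Set.range fun m : {m : Fin d → Mat (Fin d) // IsRankOnePVM m} =>
      KL (outProb σ m.1) (outProb τ m.1)) := by
  obtain ⟨r, hr, hτr⟩ := hτ.exists_pos_smul_one_le
  refine ⟨-Real.log r, ?_⟩
  rintro _ ⟨⟨m, hm⟩, rfl⟩
  exact KL_le_neg_log hr (fun x => outProb_nonneg hσ.1 (hm.1 x)) (sum_outProb hσ hm.2.1)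
    (le_outProb hτr hm)

theorem Dmeas_pos {σ τ : Mat (Fin d)} (hσ : IsState σ) (hτ : IsState τ) (hσd : σ.PosDef)
    (hτd : τ.PosDef) (hne : σ ≠ τ) : 0 < Dmeas σ τ := by
  obtain ⟨m, hm, hmne⟩ := exists_isRankOnePVM_outProb_ne hσd.isHermitian hτd.isHermitian hne
  have hKL := KL_pos (outProb_pos hσd hm) (outProb_pos hτd hm) (sum_outProb hσ hm.2.1)
    (sum_outProb hτ hm.2.1) hmne
  exact hKL.trans_le (le_ciSup (bddAbove_KL_outProb hσ hτd) ⟨m, hm⟩)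

theorem outProb_ne_of_KL_eq_Dmeas {σ τ : Mat (Fin d)} (hσ : IsState σ) (hτ : IsState τ)
    (hσd : σ.PosDef) (hτd : τ.PosDef) (hne : σ ≠ τ) {m : Fin d → Mat (Fin d)}
    (hm : KL (outProb σ m) (outProb τ m) = Dmeas σ τ) : outProb σ m ≠ outProb τ m :=
  fun h => (Dmeas_pos hσ hτ hσd hτd hne).ne' (by rw [← hm, h, KL_self])

theorem sum_mul_exp_neg_mul_log_sub_log_lt_one {X : Type*} [Fintype X] {P Q : X → ℝ} {lam : ℝ}
    (hlam₀ : 0 < lam) (hlam₁ : lam < 1) (hP : ∀ x, 0 < P x) (hQ : ∀ x, 0 < Q x)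
    (hsP : ∑ x, P x = 1) (hsQ : ∑ x, Q x = 1) (hne : P ≠ Q) :
    ∑ x, P x * Real.exp (-lam * (Real.log (P x) - Real.log (Q x))) < 1 := by
  obtain ⟨x₀, hx₀⟩ := Function.ne_iff.1 hne
  have hterm : ∀ x, P x * Real.exp (-lam * (Real.log (P x) - Real.log (Q x)))
      = Real.exp ((1 - lam) • Real.log (P x) + lam • Real.log (Q x)) := fun x => by
    rw [smul_eq_mul, smul_eq_mul, ← Real.exp_log (hP x), ← Real.exp_add, Real.log_exp]
    ring_nf
  have hmix : ∀ x, (1 - lam) • Real.exp (Real.log (P x)) + lam • Real.exp (Real.log (Q x))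
      = (1 - lam) * P x + lam * Q x := fun x => by
    rw [Real.exp_log (hP x), Real.exp_log (hQ x), smul_eq_mul, smul_eq_mul]
  have hle : ∀ x ∈ Finset.univ, P x * Real.exp (-lam * (Real.log (P x) - Real.log (Q x)))
      ≤ (1 - lam) * P x + lam * Q x := fun x _ => by
    rw [hterm, ← hmix]
    exact convexOn_exp.2 (Set.mem_univ _) (Set.mem_univ _) (by linarith) hlam₀.le (by ring)
  have hlt : P x₀ * Real.exp (-lam * (Real.log (P x₀) - Real.log (Q x₀)))
      < (1 - lam) * P x₀ + lam * Q x₀ := by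
    rw [hterm, ← hmix]
    refine strictConvexOn_exp.2 (Set.mem_univ _) (Set.mem_univ _) (fun h => hx₀ ?_)
      (by linarith) hlam₀ (by ring)
    rw [← Real.exp_log (hP x₀), h, Real.exp_log (hQ x₀)]
  calc _ < ∑ x, ((1 - lam) * P x + lam * Q x) :=
        Finset.sum_lt_sum hle ⟨x₀, Finset.mem_univ _, hlt⟩
    _ = 1 := by rw [Finset.sum_add_distrib, ← Finset.mul_sum, ← Finset.mul_sum, hsP, hsQ]; ring

noncomputable def llrExpMoment (ρ0 ρ1 : Mat (Fin d)) (lam : ℝ) (m : Fin d → Mat (Fin d)) : ℝ :=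
  ∑ y, outProb ρ0 m y * Real.exp (-lam * llr ρ0 ρ1 m y)

theorem llrExpMoment_lt_one {ρ0 ρ1 : Mat (Fin d)} (h0 : IsState ρ0) (h1 : IsState ρ1)
    (hfs0 : ρ0.PosDef) (hfs1 : ρ1.PosDef) {m : Fin d → Mat (Fin d)} (hm : IsRankOnePVM m)
    (hne : outProb ρ0 m ≠ outProb ρ1 m) {lam : ℝ} (hlam₀ : 0 < lam) (hlam₁ : lam < 1) :
    llrExpMoment ρ0 ρ1 lam m < 1 :=
  sum_mul_exp_neg_mul_log_sub_log_lt_one hlam₀ hlam₁ (outProb_pos hfs0 hm) (outProb_pos hfs1 hm)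
    (sum_outProb h0 hm.2.1) (sum_outProb h1 hm.2.1) hne

theorem llrExpMoment_pos [NeZero d] {ρ0 : Mat (Fin d)} (ρ1 : Mat (Fin d)) (hfs0 : ρ0.PosDef)
    {m : Fin d → Mat (Fin d)} (hm : IsRankOnePVM m) (lam : ℝ) : 0 < llrExpMoment ρ0 ρ1 lam m :=
  Finset.sum_pos (fun y _ => mul_pos (outProb_pos hfs0 hm y) (Real.exp_pos _))
    Finset.univ_nonempty

section SignAdaptiveTest

variable (ρ0 ρ1 : Mat (Fin d)) (m0 m1 : Fin d → Mat (Fin d))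

theorem run_fst_eq_or (b : Bool) (k : ℕ) (x : Fin k → Fin d) :
    (run ρ0 ρ1 m0 m1 b k x).1 = m0 ∨ (run ρ0 ρ1 m0 m1 b k x).1 = m1 := by
  cases k with
  | zero => cases b <;> simp [run]
  | succ k =>
    simp only [run]
    split_ifs <;> simp

variable {ρ0 ρ1 m0 m1}

theorem pathProb_nonneg (hm0 : IsRankOnePVM m0) (hm1 : IsRankOnePVM m1) {ρ : Mat (Fin d)}
    (hρ : ρ.PosSemidef) (b : Bool) :
    ∀ k (x : Fin k → Fin d), 0 ≤ pathProb ρ0 ρ1 m0 m1 ρ b k x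
  | 0, _ => by norm_num [pathProb]
  | k + 1, x => by
    refine mul_nonneg (pathProb_nonneg hm0 hm1 hρ b k _) ?_
    rcases run_fst_eq_or ρ0 ρ1 m0 m1 b k (Fin.init x) with h | h <;> rw [h]
    exacts [outProb_nonneg hρ (hm0.1 _), outProb_nonneg hρ (hm1.1 _)]

theorem E0_mono (hm0 : IsRankOnePVM m0) (hm1 : IsRankOnePVM m1) (h0 : ρ0.PosSemidef) {k : ℕ}
    {f g : Bool → (Fin k → Fin d) → ℝ} (hfg : ∀ b x, f b x ≤ g b x) :
    E0 ρ0 ρ1 m0 m1 k f ≤ E0 ρ0 ρ1 m0 m1 k g :=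
  Finset.sum_le_sum fun b _ => Finset.sum_le_sum fun x _ =>
    mul_le_mul_of_nonneg_left (hfg b x) (pathProb_nonneg hm0 hm1 h0 b k x)

theorem E0_zero_exp (lam : ℝ) :
    E0 ρ0 ρ1 m0 m1 0 (fun b x => Real.exp (-lam * Sval ρ0 ρ1 m0 m1 b 0 x)) = 1 := by
  simp [E0, pathProb, Sval, run]

theorem sum_pathProb_succ (ρ : Mat (Fin d)) (b : Bool) (k : ℕ) (g : (Fin (k + 1) → Fin d) → ℝ) :
    ∑ x, pathProb ρ0 ρ1 m0 m1 ρ b (k + 1) x * g x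
      = ∑ x, pathProb ρ0 ρ1 m0 m1 ρ b k x *
          ∑ y, outProb ρ (run ρ0 ρ1 m0 m1 b k x).1 y * g (Fin.snoc x y) := by
  rw [← (Fin.snocEquiv fun _ => Fin d).sum_comp, Fintype.sum_prod_type_right]
  refine Finset.sum_congr rfl fun x _ => ?_
  rw [Finset.mul_sum]
  refine Finset.sum_congr rfl fun y _ => ?_
  change pathProb ρ0 ρ1 m0 m1 ρ b (k + 1) (Fin.snoc x y) * g (Fin.snoc x y) = _
  simp only [pathProb, Fin.init_snoc, Fin.snoc_last, mul_assoc]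

theorem E0_succ_exp (lam : ℝ) (k : ℕ) :
    E0 ρ0 ρ1 m0 m1 (k + 1) (fun b x => Real.exp (-lam * Sval ρ0 ρ1 m0 m1 b (k + 1) x))
      = E0 ρ0 ρ1 m0 m1 k (fun b x => Real.exp (-lam * Sval ρ0 ρ1 m0 m1 b k x) *
          llrExpMoment ρ0 ρ1 lam (run ρ0 ρ1 m0 m1 b k x).1) := by
  refine Finset.sum_congr rfl fun b _ => ?_
  rw [sum_pathProb_succ]
  refine Finset.sum_congr rfl fun x _ => ?_
  simp only [llrExpMoment, Finset.mul_sum, Sval, run, Fin.init_snoc, Fin.snoc_last, mul_add,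
    Real.exp_add]
  refine Finset.sum_congr rfl fun y _ => ?_
  ring

theorem E0_exp_le_pow (hm0 : IsRankOnePVM m0) (hm1 : IsRankOnePVM m1) (h0 : ρ0.PosSemidef)
    {lam c : ℝ} (hc : 0 ≤ c) (hc0 : llrExpMoment ρ0 ρ1 lam m0 ≤ c)
    (hc1 : llrExpMoment ρ0 ρ1 lam m1 ≤ c) :
    ∀ k, E0 ρ0 ρ1 m0 m1 k (fun b x => Real.exp (-lam * Sval ρ0 ρ1 m0 m1 b k x)) ≤ c ^ k
  | 0 => (E0_zero_exp lam).le
  | k + 1 => by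
    have hstep : ∀ b x, llrExpMoment ρ0 ρ1 lam (run ρ0 ρ1 m0 m1 b k x).1 ≤ c := fun b x => by
      rcases run_fst_eq_or ρ0 ρ1 m0 m1 b k x with h | h <;> rw [h]
      exacts [hc0, hc1]
    rw [E0_succ_exp]
    calc _ ≤ E0 ρ0 ρ1 m0 m1 k (fun b x => Real.exp (-lam * Sval ρ0 ρ1 m0 m1 b k x) * c) :=
          E0_mono hm0 hm1 h0 fun b x => mul_le_mul_of_nonneg_left (hstep b x) (Real.exp_pos _).le
      _ = E0 ρ0 ρ1 m0 m1 k (fun b x => Real.exp (-lam * Sval ρ0 ρ1 m0 m1 b k x)) * c := by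
          simp only [E0, Finset.sum_mul, mul_assoc]
      _ ≤ c ^ k * c := mul_le_mul_of_nonneg_right (E0_exp_le_pow hm0 hm1 h0 hc hc0 hc1 k) hc
      _ = c ^ (k + 1) := (pow_succ c k).symm

theorem probSneg_le_E0_exp (hm0 : IsRankOnePVM m0) (hm1 : IsRankOnePVM m1) (h0 : ρ0.PosSemidef)
    {lam : ℝ} (hlam : 0 ≤ lam) (k : ℕ) :
    probSneg ρ0 ρ1 m0 m1 k
      ≤ E0 ρ0 ρ1 m0 m1 k (fun b x => Real.exp (-lam * Sval ρ0 ρ1 m0 m1 b k x)) := by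
  refine Finset.sum_le_sum fun b _ => Finset.sum_le_sum fun x _ => ?_
  have hp : 0 ≤ pathProb ρ0 ρ1 m0 m1 ρ0 b k x := pathProb_nonneg hm0 hm1 h0 b k x
  split_ifs with hS
  · exact le_mul_of_one_le_right hp (Real.one_le_exp (by nlinarith))
  · exact mul_nonneg hp (Real.exp_pos _).le

end SignAdaptiveTest

/-- Lemma 13(ii) in the paper: for the sign-adaptive SQPRT, for all
sufficiently small `λ > 0` there is `c ∈ (0,1)` with
`E_0[e^{−λ S_k}] ≤ c^k` and `P_0(S_k < 0) ≤ c^k` for all `k ≥ 1`. -/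
theorem sign_adaptive_exponential_decay
    (d : ℕ) (hd : 0 < d) (ρ0 ρ1 : Mat (Fin d))
    (h0 : IsState ρ0) (h1 : IsState ρ1)
    (hfs0 : ρ0.PosDef) (hfs1 : ρ1.PosDef) (hne : ρ0 ≠ ρ1)
    (m0 m1 : Fin d → Mat (Fin d))
    (hm0 : IsRankOnePVM m0) (hm1 : IsRankOnePVM m1)
    (hopt0 : KL (outProb ρ0 m0) (outProb ρ1 m0) = Dmeas ρ0 ρ1)
    (hopt1 : KL (outProb ρ1 m1) (outProb ρ0 m1) = Dmeas ρ1 ρ0) :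
    ∃ lam0 : ℝ, 0 < lam0 ∧ ∀ lam : ℝ, 0 < lam → lam ≤ lam0 →
      ∃ c : ℝ, 0 < c ∧ c < 1 ∧ ∀ k : ℕ, 1 ≤ k →
        E0 ρ0 ρ1 m0 m1 k
            (fun b x => Real.exp (-lam * Sval ρ0 ρ1 m0 m1 b k x)) ≤ c ^ k ∧
        probSneg ρ0 ρ1 m0 m1 k ≤ c ^ k := by
  have : NeZero d := ⟨hd.ne'⟩
  refine ⟨1 / 2, one_half_pos, fun lam hlam hlam_le => ?_⟩
  have hlam₁ : lam < 1 := by linarith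
  have hφ0 : llrExpMoment ρ0 ρ1 lam m0 < 1 := llrExpMoment_lt_one h0 h1 hfs0 hfs1 hm0
    (outProb_ne_of_KL_eq_Dmeas h0 h1 hfs0 hfs1 hne hopt0) hlam hlam₁
  have hφ1 : llrExpMoment ρ0 ρ1 lam m1 < 1 := llrExpMoment_lt_one h0 h1 hfs0 hfs1 hm1
    (outProb_ne_of_KL_eq_Dmeas h1 h0 hfs1 hfs0 hne.symm hopt1).symm hlam hlam₁
  set c := max (llrExpMoment ρ0 ρ1 lam m0) (llrExpMoment ρ0 ρ1 lam m1)
  have hc : 0 < c := (llrExpMoment_pos ρ1 hfs0 hm0 lam).trans_le (le_max_left _ _)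
  have hE := E0_exp_le_pow hm0 hm1 h0.1 hc.le (le_max_left _ _) (le_max_right _ _)
  exact ⟨c, hc, max_lt hφ0 hφ1, fun k _ =>
    ⟨hE k, (probSneg_le_E0_exp hm0 hm1 h0.1 hlam.le k).trans (hE k)⟩⟩

end SQHT
end
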